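/- Let δ be an (A,B)-root. Suppose there exists α₀ ∈ C(δ) ∩ A that is strictly shorter than every other simple root in C(δ) \ {α₀}, and there exists β ∈ C(δ) \ {α₀} with c_{α₀}(δ) = −2(β,α₀)/(α₀,α₀). Then σ = β − (2(β,α₀)/(α₀,α₀))·α₀ is an (A,B)-root of length |β| satisfying σ ≤ δ, Σ_{α∈A} c_α(σ)·(α,α) ≥ Σ_{β'∈B} c_{β'}(σ)·(β',β'), and all simple roots in C(δ−σ) have the same length not greater than |σ|; in particular, δ is a significant (A,B)-root. -/

import Mathlib

/-!
The root `σ = s_{α₀} β` has the length of `β`, and since `c_{α₀}(δ) = -2(β,α₀)/(α₀,α₀)` it equals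
`β + c_{α₀}(δ) α₀`. Coefficients of positive roots are integers, so `c_β(δ) ≥ 1` and `σ ≤ δ`,
while `δ - σ` is supported on `C(δ) \ {α₀}`. The sum inequality reduces to
`|β|² ≤ -2(β,α₀) = c_{α₀}(δ) |α₀|²`, true because `2(α₀,β)/(β,β)` is a negative integer.

For the lengths: the support of a positive root is connected in the Dynkin diagram (add one simple
root at a time), and along a path of non-orthogonal roots reflections move any root to one of the
same length that is not orthogonal to the end point. Non-orthogonal roots have squared-length
ratio `1, 2, 3, 1/2` or `1/3`, so every simple root of `C(δ)` other than the strictly shortest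
`α₀` has squared length `2|α₀|²` or `3|α₀|²`, and two such roots must have the same length.
-/

open scoped RealInnerProductSpace
open scoped Classical

/-- A reduced crystallographic root system `roots` spanning a real inner product
space `V`, with a chosen set `pos` of positive roots, the corresponding base
`simple` of simple roots, and the coefficient function `coeff`, where
`coeff ξ α = c_α(ξ)` is the coefficient of the simple root `α` in the unique
expression `ξ = ∑_{α ∈ simple} c_α(ξ) • α`. -/
structure RootSystemData (V : Type*) [NormedAddCommGroup V] [InnerProductSpace ℝ V] where
  roots : Finset V
  pos : Finset V
  simple : Finset V
  coeff : V → V → ℝ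
  pos_subset : pos ⊆ roots
  simple_subset : simple ⊆ pos
  root_ne_zero : ∀ δ ∈ roots, δ ≠ (0 : V)
  neg_mem : ∀ δ ∈ roots, -δ ∈ roots
  pos_or_neg : ∀ δ ∈ roots, δ ∈ pos ∨ -δ ∈ pos
  pos_neg_not : ∀ δ ∈ pos, -δ ∉ pos
  reduced : ∀ δ ∈ roots, ∀ t : ℝ, t • δ ∈ roots → t = 1 ∨ t = -1
  crystallographic : ∀ δ ∈ roots, ∀ ε ∈ roots, ∃ n : ℤ, 2 * ⟪δ, ε⟫ / ⟪ε, ε⟫ = (n : ℝ)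
  reflect_mem : ∀ δ ∈ roots, ∀ ε ∈ roots, δ - (2 * ⟪δ, ε⟫ / ⟪ε, ε⟫) • ε ∈ roots
  span_eq_top : Submodule.span ℝ (simple : Set V) = ⊤
  linearIndependent : LinearIndependent ℝ (fun α : simple => (α : V))
  coeff_spec : ∀ ξ : V, ξ = ∑ α ∈ simple, coeff ξ α • α
  pos_coeff_nonneg : ∀ δ ∈ pos, ∀ α ∈ simple, 0 ≤ coeff δ α

namespace RootSystemData

variable {V : Type*} [NormedAddCommGroup V] [InnerProductSpace ℝ V]

/-- The support `C(ξ)` of `ξ`: the set of simple roots with nonzero coefficient in `ξ`. -/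
noncomputable def support (R : RootSystemData V) (ξ : V) : Finset V :=
  R.simple.filter fun α => R.coeff ξ α ≠ 0

/-- The coefficientwise partial order: `x ≤ y` iff `c_α(x) ≤ c_α(y)` for all simple `α`. -/
def cle (R : RootSystemData V) (x y : V) : Prop :=
  ∀ α ∈ R.simple, R.coeff x α ≤ R.coeff y α

/-- An `(A,B)`-root: a positive root whose support lies in `A ∪ B` and which has a
strictly positive coefficient at some element of `A`. -/
def IsABRoot (R : RootSystemData V) (A B : Finset V) (δ : V) : Prop :=
  δ ∈ R.pos ∧ R.support δ ⊆ A ∪ B ∧ ∃ α₀ ∈ A, 0 < R.coeff δ α₀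

/-- A significant `(A,B)`-root. -/
def IsSignificant (R : RootSystemData V) (A B : Finset V) (δ : V) : Prop :=
  R.IsABRoot A B δ ∧ ∃ σ : V, R.IsABRoot A B σ ∧ R.cle σ δ ∧
    (∑ β ∈ B, R.coeff σ β * ⟪β, β⟫) ≤ (∑ α ∈ A, R.coeff σ α * ⟪α, α⟫) ∧
    (∀ x ∈ R.support (δ - σ), ∀ y ∈ R.support (δ - σ), ‖x‖ = ‖y‖) ∧
    (∀ x ∈ R.support (δ - σ), ‖x‖ ≤ ‖σ‖)

/-- `ℓ(A,B)`, the number of significant `(A,B)`-roots. -/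
noncomputable def ell (R : RootSystemData V) (A B : Finset V) : ℕ :=
  (R.pos.filter fun δ => R.IsSignificant A B δ).card

/-- `γ`, the half-sum of the positive roots. -/
noncomputable def gamma (R : RootSystemData V) : V :=
  (2 : ℝ)⁻¹ • ∑ δ ∈ R.pos, δ

/-- A weight: `2(β,α)/(α,α) ∈ ℤ` for all roots `α`. -/
def IsWeight (R : RootSystemData V) (β : V) : Prop :=
  ∀ δ ∈ R.roots, ∃ n : ℤ, 2 * ⟪β, δ⟫ / ⟪δ, δ⟫ = (n : ℝ)

/-- A regular weight: not orthogonal to any positive root. -/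
def IsRegular (R : RootSystemData V) (lam : V) : Prop :=
  ∀ δ ∈ R.pos, ⟪lam, δ⟫ ≠ 0

end RootSystemData

section

variable {V : Type*} [NormedAddCommGroup V] [InnerProductSpace ℝ V]

lemma inner_self_reflect (x y : V) :
    ⟪x - (2 * ⟪x, y⟫ / ⟪y, y⟫) • y, x - (2 * ⟪x, y⟫ / ⟪y, y⟫) • y⟫ = ⟪x, x⟫ := by
  by_cases hy : ⟪y, y⟫ = 0
  · simp only [hy, div_zero, zero_smul, sub_zero]
  simp only [inner_sub_left, inner_sub_right, real_inner_smul_left, real_inner_smul_right,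
    real_inner_comm x y]
  field_simp
  ring

lemma norm_reflect (x y : V) : ‖x - (2 * ⟪x, y⟫ / ⟪y, y⟫) • y‖ = ‖x‖ := by
  refine (sq_eq_sq₀ (norm_nonneg _) (norm_nonneg _)).1 ?_
  rw [← real_inner_self_eq_norm_sq, ← real_inner_self_eq_norm_sq, inner_self_reflect]

/-- The Dynkin diagram of `S` with the edge multiplicities forgotten. -/
def dynkinGraph (S : Finset V) : SimpleGraph V where
  Adj u v := u ≠ v ∧ u ∈ S ∧ v ∈ S ∧ ⟪u, v⟫ ≠ 0
  symm := ⟨fun _ _ ⟨hne, hu, hv, h⟩ => ⟨hne.symm, hv, hu, by rwa [real_inner_comm]⟩⟩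
  loopless := ⟨fun _ h => h.1 rfl⟩

lemma dynkinGraph_adj {S : Finset V} {u v : V} :
    (dynkinGraph S).Adj u v ↔ u ≠ v ∧ u ∈ S ∧ v ∈ S ∧ ⟪u, v⟫ ≠ 0 :=
  Iff.rfl

lemma dynkinGraph_mono {S T : Finset V} (h : S ⊆ T) : dynkinGraph S ≤ dynkinGraph T := by
  intro u v huv
  obtain ⟨hne, hu, hv, hi⟩ := dynkinGraph_adj.1 huv
  exact ⟨hne, h hu, h hv, hi⟩

end

namespace RootSystemData

variable {V : Type*} [NormedAddCommGroup V] [InnerProductSpace ℝ V] (R : RootSystemData V)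

noncomputable def basis : Module.Basis R.simple ℝ V :=
  Module.Basis.mk R.linearIndependent (by simp [R.span_eq_top])

lemma coeff_eq_basis_repr (ξ : V) {α : V} (hα : α ∈ R.simple) :
    R.coeff ξ α = R.basis.repr ξ ⟨α, hα⟩ := by
  have hξ : ξ = ∑ i : R.simple, R.coeff ξ i • R.basis i := by
    rw [basis, Module.Basis.coe_mk, Finset.sum_coe_sort R.simple fun α => R.coeff ξ α • α]
    exact R.coeff_spec ξ
  conv_rhs => rw [hξ, Module.Basis.repr_sum_self]

variable {R}

lemma coeff_add (ξ η : V) {α : V} (hα : α ∈ R.simple) :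
    R.coeff (ξ + η) α = R.coeff ξ α + R.coeff η α := by
  simp [R.coeff_eq_basis_repr _ hα]

lemma coeff_sub (ξ η : V) {α : V} (hα : α ∈ R.simple) :
    R.coeff (ξ - η) α = R.coeff ξ α - R.coeff η α := by
  simp [R.coeff_eq_basis_repr _ hα]

lemma coeff_neg (ξ : V) {α : V} (hα : α ∈ R.simple) : R.coeff (-ξ) α = -R.coeff ξ α := by
  simp [R.coeff_eq_basis_repr _ hα]

lemma coeff_smul (t : ℝ) (ξ : V) {α : V} (hα : α ∈ R.simple) :
    R.coeff (t • ξ) α = t * R.coeff ξ α := by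
  simp [R.coeff_eq_basis_repr _ hα]

lemma coeff_simple {β α : V} (hβ : β ∈ R.simple) (hα : α ∈ R.simple) :
    R.coeff β α = if β = α then 1 else 0 := by
  have : β = R.basis ⟨β, hβ⟩ := by simp [basis]
  rw [R.coeff_eq_basis_repr _ hα]
  conv_lhs => rw [this]
  simp [Module.Basis.repr_self, Finsupp.single_apply]

lemma mem_support {ξ α : V} : α ∈ R.support ξ ↔ α ∈ R.simple ∧ R.coeff ξ α ≠ 0 :=
  Finset.mem_filter

lemma support_subset_simple (ξ : V) : R.support ξ ⊆ R.simple :=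
  Finset.filter_subset _ _

lemma coeff_eq_zero_of_notMem_support {ξ α : V} (hα : α ∈ R.simple) (h : α ∉ R.support ξ) :
    R.coeff ξ α = 0 :=
  not_not.1 fun hc => h (mem_support.2 ⟨hα, hc⟩)

lemma mem_roots_of_mem_simple {α : V} (hα : α ∈ R.simple) : α ∈ R.roots :=
  R.pos_subset (R.simple_subset hα)

lemma coeff_pos_of_mem_support {δ α : V} (hδ : δ ∈ R.pos) (hα : α ∈ R.support δ) :
    0 < R.coeff δ α :=
  (R.pos_coeff_nonneg δ hδ α (mem_support.1 hα).1).lt_of_ne' (mem_support.1 hα).2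

lemma mem_pos_of_coeff_pos {δ α : V} (hδ : δ ∈ R.roots) (hα : α ∈ R.simple)
    (h : 0 < R.coeff δ α) : δ ∈ R.pos := by
  refine (R.pos_or_neg δ hδ).resolve_right fun hneg => ?_
  have := R.pos_coeff_nonneg _ hneg α hα
  rw [coeff_neg _ hα] at this
  linarith

lemma inner_eq_sum_coeff (ξ v : V) : ⟪ξ, v⟫ = ∑ α ∈ R.simple, R.coeff ξ α * ⟪α, v⟫ := by
  conv_lhs => rw [R.coeff_spec ξ]
  simp [sum_inner, real_inner_smul_left]

lemma inner_eq_zero_of_forall_mem_support {ξ v : V} (h : ∀ α ∈ R.support ξ, ⟪α, v⟫ = 0) :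
    ⟪ξ, v⟫ = 0 := by
  rw [inner_eq_sum_coeff]
  refine Finset.sum_eq_zero fun α hα => ?_
  by_cases hαξ : α ∈ R.support ξ
  · rw [h α hαξ, mul_zero]
  · rw [R.coeff_eq_zero_of_notMem_support hα hαξ, zero_mul]

lemma eq_coeff_smul_of_support_subset {ξ α : V} (hα : α ∈ R.simple)
    (h : R.support ξ ⊆ {α}) : ξ = R.coeff ξ α • α := by
  conv_lhs => rw [R.coeff_spec ξ]
  refine Finset.sum_eq_single_of_mem α hα fun γ hγ hne => ?_
  rw [R.coeff_eq_zero_of_notMem_support hγ fun hmem => hne (Finset.mem_singleton.1 (h hmem)),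
    zero_smul]

lemma support_nonempty {δ : V} (hδ : δ ∈ R.roots) : (R.support δ).Nonempty := by
  rw [Finset.nonempty_iff_ne_empty]
  intro h
  refine R.root_ne_zero δ hδ ?_
  rw [R.coeff_spec δ]
  refine Finset.sum_eq_zero fun α hα => ?_
  rw [R.coeff_eq_zero_of_notMem_support hα (h ▸ Finset.notMem_empty α), zero_smul]

lemma inner_self_pos {u : V} (hu : u ∈ R.roots) : 0 < ⟪u, u⟫ :=
  real_inner_self_pos.2 (R.root_ne_zero u hu)

lemma exists_cartan_mul_lt_four {u v : V} (hu : u ∈ R.roots) (hv : v ∈ R.roots)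
    (h0 : ⟪u, v⟫ ≠ 0) (hvu : v ≠ u) (hvu' : v ≠ -u) :
    ∃ n m : ℤ, n * ⟪v, v⟫ = 2 * ⟪u, v⟫ ∧ m * ⟪u, u⟫ = 2 * ⟪u, v⟫ ∧ 0 < n * m ∧ n * m < 4 := by
  obtain ⟨n, hn⟩ := R.crystallographic u hu v hv
  obtain ⟨m, hm⟩ := R.crystallographic v hv u hu
  have huu := inner_self_pos hu
  have hvv := inner_self_pos hv
  have hn' : n * ⟪v, v⟫ = 2 * ⟪u, v⟫ := by rw [← hn]; field_simp
  have hm' : m * ⟪u, u⟫ = 2 * ⟪u, v⟫ := by rw [← hm, real_inner_comm]; field_simp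
  have hnm : (n * m : ℝ) * (⟪u, u⟫ * ⟪v, v⟫) = 4 * ⟪u, v⟫ ^ 2 := by
    linear_combination (m * ⟪u, u⟫) * hn' + (2 * ⟪u, v⟫) * hm'
  have hcs := real_inner_mul_inner_self_le u v
  have hpos : (0 : ℝ) < n * m := by
    have : 0 < 4 * ⟪u, v⟫ ^ 2 := by positivity
    nlinarith [mul_pos huu hvv]
  have hle : (n * m : ℝ) ≤ 4 := by nlinarith [mul_pos huu hvv]
  refine ⟨n, m, hn', hm', by exact_mod_cast hpos, lt_of_le_of_ne (by exact_mod_cast hle) ?_⟩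
  intro h4
  -- equality in Cauchy–Schwarz makes `v` a multiple of `u`, excluded by reducedness
  have heq : |⟪u, v⟫| = ‖u‖ * ‖v‖ := by
    have h4' : (n * m : ℝ) = 4 := by exact_mod_cast h4
    rw [h4', real_inner_self_eq_norm_sq, real_inner_self_eq_norm_sq] at hnm
    exact (sq_eq_sq₀ (abs_nonneg _) (by positivity)).1 (by rw [sq_abs]; linarith)
  obtain ⟨r, -, rfl⟩ :=
    (norm_inner_eq_norm_iff (𝕜 := ℝ) (R.root_ne_zero u hu) (R.root_ne_zero _ hv)).1 heq
  rcases R.reduced u hu r hv with rfl | rfl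
  · exact hvu (one_smul ℝ u)
  · exact hvu' (neg_one_smul ℝ u)

lemma sub_mem_roots_of_inner_pos {u v : V} (hu : u ∈ R.roots) (hv : v ∈ R.roots)
    (huv : u ≠ v) (hpos : 0 < ⟪u, v⟫) : u - v ∈ R.roots := by
  have hvu' : v ≠ -u := by
    rintro rfl
    rw [inner_neg_right] at hpos
    linarith [inner_self_pos hu]
  obtain ⟨n, m, hn, hm, h0, h4⟩ :=
    exists_cartan_mul_lt_four hu hv hpos.ne' (Ne.symm huv) hvu'
  have hn0 : (0 : ℝ) < n := pos_of_mul_pos_left (hn ▸ by linarith) (inner_self_pos hv).le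
  have hm0 : (0 : ℝ) < m := pos_of_mul_pos_left (hm ▸ by linarith) (inner_self_pos hu).le
  have hn1 : 0 < n := by exact_mod_cast hn0
  have hm1 : 0 < m := by exact_mod_cast hm0
  rcases (show n = 1 ∨ m = 1 by by_contra! h; nlinarith [h.1.lt_of_le' hn1, h.2.lt_of_le' hm1])
    with rfl | rfl
  · have hc : 2 * ⟪u, v⟫ / ⟪v, v⟫ = 1 := by
      rw [← hn, Int.cast_one, one_mul, div_self (inner_self_pos hv).ne']
    simpa only [hc, one_smul] using R.reflect_mem u hu v hv
  · have hc : 2 * ⟪v, u⟫ / ⟪u, u⟫ = 1 := by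
      rw [real_inner_comm, ← hm, Int.cast_one, one_mul, div_self (inner_self_pos hu).ne']
    simpa only [hc, one_smul, neg_sub] using R.neg_mem _ (R.reflect_mem v hv u hu)

lemma inner_self_eq_or_of_inner_ne_zero {u v : V} (hu : u ∈ R.roots) (hv : v ∈ R.roots)
    (h0 : ⟪u, v⟫ ≠ 0) :
    ⟪v, v⟫ = ⟪u, u⟫ ∨ ⟪v, v⟫ = 2 * ⟪u, u⟫ ∨ ⟪v, v⟫ = 3 * ⟪u, u⟫ ∨
      ⟪u, u⟫ = 2 * ⟪v, v⟫ ∨ ⟪u, u⟫ = 3 * ⟪v, v⟫ := by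
  by_cases hvu : v = u
  · simp [hvu]
  by_cases hvu' : v = -u
  · simp [hvu']
  obtain ⟨n, m, hn, hm, h0, h4⟩ := exists_cartan_mul_lt_four hu hv h0 hvu hvu'
  have habs : (n.natAbs : ℝ) * ⟪v, v⟫ = m.natAbs * ⟪u, u⟫ := by
    have := congrArg abs (hn.trans hm.symm)
    rwa [abs_mul, abs_mul, abs_of_nonneg real_inner_self_nonneg,
      abs_of_nonneg real_inner_self_nonneg, ← Int.cast_abs, ← Int.cast_abs, Int.abs_eq_natAbs,
      Int.abs_eq_natAbs, Int.cast_natCast, Int.cast_natCast] at this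
  have hprod : 0 < n.natAbs * m.natAbs ∧ n.natAbs * m.natAbs < 4 := by
    rw [← Int.natAbs_mul]
    omega
  generalize n.natAbs = k, m.natAbs = l at habs hprod
  obtain ⟨h0, h4⟩ := hprod
  have hk : k ≤ 3 := by nlinarith [Nat.pos_of_mul_pos_left h0]
  have hl : l ≤ 3 := by nlinarith [Nat.pos_of_mul_pos_right h0]
  interval_cases k <;> interval_cases l <;> (try omega) <;> push_cast at habs
  · exact Or.inl (by linarith)
  · exact Or.inr <| Or.inl (by linarith)
  · exact Or.inr <| Or.inr <| Or.inl (by linarith)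
  · exact Or.inr <| Or.inr <| Or.inr <| Or.inl (by linarith)
  · exact Or.inr <| Or.inr <| Or.inr <| Or.inr (by linarith)

lemma inner_self_le_neg_cartan_mul {u v : V} (hu : u ∈ R.roots) (hv : v ∈ R.roots)
    (h : 2 * ⟪u, v⟫ / ⟪v, v⟫ < 0) : ⟪u, u⟫ ≤ -(2 * ⟪u, v⟫ / ⟪v, v⟫) * ⟪v, v⟫ := by
  have huu := inner_self_pos hu
  have hvv := inner_self_pos hv
  have huv := mul_neg_of_neg_of_pos h hvv
  rw [div_mul_cancel₀ _ hvv.ne'] at huv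
  rw [neg_mul, div_mul_cancel₀ _ hvv.ne']
  obtain ⟨m, hm⟩ := R.crystallographic v hv u hu
  have hm' : m * ⟪u, u⟫ = 2 * ⟪u, v⟫ := by rw [← hm, real_inner_comm]; field_simp
  have hm0 : m < 0 := by
    have : (m : ℝ) < 0 := neg_of_mul_neg_left (by linarith) huu.le
    exact_mod_cast this
  have hm1 : (m : ℝ) ≤ -1 := by exact_mod_cast Int.le_sub_one_of_lt hm0
  nlinarith

lemma support_simple {α : V} (hα : α ∈ R.simple) : R.support α = {α} := by
  ext γ
  rw [mem_support, Finset.mem_singleton]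
  by_cases hγα : γ = α
  · subst hγα
    simp [coeff_simple hα hα, hα]
  · simp only [hγα, iff_false, not_and, not_not]
    intro hγ
    rw [coeff_simple hα hγ, if_neg (Ne.symm hγα)]

lemma cle_trans {x y z : V} (hxy : R.cle x y) (hyz : R.cle y z) : R.cle x z :=
  fun α hα => (hxy α hα).trans (hyz α hα)

lemma cle_sub_of_mem_pos (δ : V) {η : V} (hη : η ∈ R.pos) : R.cle (δ - η) δ := by
  intro α hα
  rw [coeff_sub _ _ hα]
  linarith [R.pos_coeff_nonneg η hη α hα]

lemma exists_mem_support_ne {δ : V} (hδ : δ ∈ R.pos) (hns : δ ∉ R.simple) {α : V}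
    (hα : α ∈ R.simple) : ∃ γ ∈ R.support δ, γ ≠ α := by
  by_contra! h
  have hδα : δ = R.coeff δ α • α :=
    eq_coeff_smul_of_support_subset hα fun γ hγ => Finset.mem_singleton.2 (h γ hγ)
  rcases R.reduced α (mem_roots_of_mem_simple hα) _ (hδα ▸ R.pos_subset hδ) with hc | hc
  · exact hns (by rwa [hδα, hc, one_smul])
  · refine R.pos_neg_not δ hδ ?_
    rw [hδα, hc, neg_one_smul, neg_neg]
    exact R.simple_subset hα

lemma exists_simple_sub_mem_pos {δ : V} (hδ : δ ∈ R.pos) (hns : δ ∉ R.simple) :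
    ∃ α ∈ R.simple, δ - α ∈ R.pos := by
  have hδr := R.pos_subset hδ
  obtain ⟨α, hα, hterm⟩ : ∃ α ∈ R.simple, 0 < R.coeff δ α * ⟪α, δ⟫ := by
    by_contra! h
    have := inner_self_pos hδr
    rw [inner_eq_sum_coeff] at this
    exact (Finset.sum_nonpos h).not_gt this
  have hpos : 0 < ⟪δ, α⟫ :=
    real_inner_comm δ α ▸ pos_of_mul_pos_right hterm (R.pos_coeff_nonneg δ hδ α hα)
  have hroot : δ - α ∈ R.roots :=
    sub_mem_roots_of_inner_pos hδr (mem_roots_of_mem_simple hα) (fun h => hns (h ▸ hα)) hpos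
  obtain ⟨γ, hγ, hγα⟩ := exists_mem_support_ne hδ hns hα
  have hγs := support_subset_simple δ hγ
  refine ⟨α, hα, mem_pos_of_coeff_pos hroot hγs ?_⟩
  rw [coeff_sub _ _ hγs, coeff_simple hα hγs, if_neg (Ne.symm hγα), sub_zero]
  exact coeff_pos_of_mem_support hδ hγ

theorem pos_induction {P : V → Prop} (simple : ∀ α ∈ R.simple, P α)
    (add : ∀ δ ∈ R.pos, ∀ α ∈ R.simple, δ + α ∈ R.pos → P δ → P (δ + α)) :
    ∀ δ ∈ R.pos, P δ := by
  intro δ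
  induction δ using (measure fun δ => (R.pos.filter (R.cle · δ)).card).wf.induction with
  | h δ ih =>
  intro hδ
  by_cases hs : δ ∈ R.simple
  · exact simple δ hs
  obtain ⟨α, hα, hδα⟩ := exists_simple_sub_mem_pos hδ hs
  suffices hlt : (R.pos.filter (R.cle · (δ - α))).card < (R.pos.filter (R.cle · δ)).card by
    simpa only [sub_add_cancel] using add _ hδα α hα (by rwa [sub_add_cancel]) (ih _ hlt hδα)
  refine Finset.card_lt_card ((Finset.ssubset_iff_of_subset ?_).2 ⟨δ, ?_, fun h => ?_⟩)
  · intro γ hγ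
    rw [Finset.mem_filter] at hγ ⊢
    exact ⟨hγ.1, cle_trans hγ.2 (cle_sub_of_mem_pos δ (R.simple_subset hα))⟩
  · exact Finset.mem_filter.2 ⟨hδ, fun _ _ => le_rfl⟩
  · have := (Finset.mem_filter.1 h).2 α hα
    rw [coeff_sub _ _ hα, coeff_simple hα hα, if_pos rfl] at this
    linarith

lemma exists_int_coeff_eq {δ : V} (hδ : δ ∈ R.pos) {α : V} (hα : α ∈ R.simple) :
    ∃ n : ℤ, R.coeff δ α = n := by
  refine pos_induction (P := fun δ => ∀ α ∈ R.simple, ∃ n : ℤ, R.coeff δ α = n) ?_ ?_ δ hδ α hα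
  · intro β hβ α hα
    exact ⟨if β = α then 1 else 0, by rw [coeff_simple hβ hα]; split_ifs <;> simp⟩
  · intro δ _ β hβ _ ih α hα
    obtain ⟨n, hn⟩ := ih α hα
    exact ⟨n + if β = α then 1 else 0, by
      rw [coeff_add _ _ hα, coeff_simple hβ hα, hn]; split_ifs <;> simp⟩

lemma one_le_coeff_of_mem_support {δ α : V} (hδ : δ ∈ R.pos) (hα : α ∈ R.support δ) :
    1 ≤ R.coeff δ α := by
  obtain ⟨n, hn⟩ := exists_int_coeff_eq hδ (support_subset_simple δ hα)
  have hpos := coeff_pos_of_mem_support hδ hα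
  rw [hn] at hpos ⊢
  have : 0 < n := by exact_mod_cast hpos
  exact_mod_cast this

lemma support_add_simple {δ α : V} (hδ : δ ∈ R.pos) (hα : α ∈ R.simple) :
    R.support (δ + α) = insert α (R.support δ) := by
  ext γ
  by_cases hγα : γ = α
  · subst hγα
    rw [mem_support, coeff_add _ _ hα, coeff_simple hα hα, if_pos rfl]
    simp only [Finset.mem_insert_self, iff_true]
    exact ⟨hα, by linarith [R.pos_coeff_nonneg δ hδ γ hα]⟩
  · simp only [Finset.mem_insert, hγα, false_or, mem_support, and_congr_right_iff]
    intro hγ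
    rw [coeff_add _ _ hγ, coeff_simple hα hγ, if_neg (Ne.symm hγα), add_zero]

lemma sub_simple_notMem_roots {δ α : V} (hδ : δ ∈ R.pos) (hα : α ∈ R.simple)
    (hαδ : α ∉ R.support δ) : δ - α ∉ R.roots := by
  intro h
  obtain ⟨γ, hγ⟩ := support_nonempty (R.pos_subset hδ)
  have hγs := support_subset_simple δ hγ
  have hγα : γ ≠ α := fun h => hαδ (h ▸ hγ)
  have hpos : δ - α ∈ R.pos := by
    refine mem_pos_of_coeff_pos h hγs ?_
    rw [coeff_sub _ _ hγs, coeff_simple hα hγs, if_neg (Ne.symm hγα), sub_zero]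
    exact coeff_pos_of_mem_support hδ hγ
  have := R.pos_coeff_nonneg _ hpos α hα
  rw [coeff_sub _ _ hα, coeff_simple hα hα, if_pos rfl,
    coeff_eq_zero_of_notMem_support hα hαδ] at this
  norm_num at this

lemma exists_mem_support_inner_ne_zero {δ α : V} (hδ : δ ∈ R.pos) (hα : α ∈ R.simple)
    (hαδ : α ∉ R.support δ) (hδα : δ + α ∈ R.roots) : ∃ γ ∈ R.support δ, ⟪γ, α⟫ ≠ 0 := by
  by_contra! h
  have h0 : ⟪δ, α⟫ = 0 := inner_eq_zero_of_forall_mem_support h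
  -- otherwise reflecting `δ + α` in `α` gives the root `δ - α`
  have := R.reflect_mem _ hδα α (mem_roots_of_mem_simple hα)
  rw [inner_add_left, h0, zero_add, mul_div_assoc,
    div_self (inner_self_pos (mem_roots_of_mem_simple hα)).ne', mul_one, two_smul,
    add_sub_add_right_eq_sub] at this
  exact sub_simple_notMem_roots hδ hα hαδ this

theorem reachable_of_mem_support {δ : V} (hδ : δ ∈ R.pos) {x y : V} (hx : x ∈ R.support δ)
    (hy : y ∈ R.support δ) : (dynkinGraph (R.support δ)).Reachable x y := by
  refine pos_induction (P := fun δ => ∀ x ∈ R.support δ, ∀ y ∈ R.support δ,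
    (dynkinGraph (R.support δ)).Reachable x y) ?_ ?_ δ hδ x hx y hy
  · intro α hα x hx y hy
    rw [support_simple hα, Finset.mem_singleton] at hx hy
    rw [hx, hy]
  · intro δ hδ α hα hδα ih
    rw [support_add_simple hδ hα]
    by_cases hαδ : α ∈ R.support δ
    · rwa [Finset.insert_eq_of_mem hαδ]
    obtain ⟨γ, hγ, hγα⟩ := exists_mem_support_inner_ne_zero hδ hα hαδ (R.pos_subset hδα)
    have hfrom : ∀ x ∈ insert α (R.support δ),
        (dynkinGraph (insert α (R.support δ))).Reachable γ x := by
      intro x hx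
      rcases Finset.mem_insert.1 hx with rfl | hx
      · exact SimpleGraph.Adj.reachable ⟨fun h => hαδ (h ▸ hγ), Finset.mem_insert_of_mem hγ,
          Finset.mem_insert_self _ _, hγα⟩
      · exact (ih γ hγ x hx).mono (dynkinGraph_mono (Finset.subset_insert _ _))
    intro x hx y hy
    exact (hfrom x hx).symm.trans (hfrom y hy)

lemma exists_root_inner_ne_zero_of_reachable {S : Finset V} (hS : S ⊆ R.roots) {x y : V}
    (hxy : (dynkinGraph S).Reachable x y) {z : V} (hz : z ∈ R.roots) (hzx : ⟪z, x⟫ ≠ 0) :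
    ∃ z' ∈ R.roots, ⟪z', z'⟫ = ⟪z, z⟫ ∧ ⟪z', y⟫ ≠ 0 := by
  obtain ⟨p⟩ := hxy
  induction p generalizing z with
  | nil => exact ⟨z, hz, rfl, hzx⟩
  | @cons u v w huv p ih =>
    obtain ⟨-, hu, -, huv⟩ := dynkinGraph_adj.1 huv
    by_cases hzv : ⟪z, v⟫ = 0
    · have hur := hS hu
      obtain ⟨z', hz', hzz', hz'w⟩ := ih (R.reflect_mem z hz u hur) (by
        rw [inner_sub_left, real_inner_smul_left, hzv, zero_sub, neg_ne_zero]
        exact mul_ne_zero (div_ne_zero (mul_ne_zero two_ne_zero hzx)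
          (inner_self_pos hur).ne') huv)
      exact ⟨z', hz', hzz'.trans (inner_self_reflect z u), hz'w⟩
    · exact ih hz hzv

theorem norm_eq_of_mem_support {δ α₀ : V} (hδ : δ ∈ R.pos) (hα₀ : α₀ ∈ R.support δ)
    (hshort : ∀ x ∈ R.support δ, x ≠ α₀ → ‖α₀‖ < ‖x‖) {x y : V} (hx : x ∈ R.support δ)
    (hxα₀ : x ≠ α₀) (hy : y ∈ R.support δ) (hyα₀ : y ≠ α₀) : ‖x‖ = ‖y‖ := by
  have hroots : R.support δ ⊆ R.roots :=
    fun γ hγ => mem_roots_of_mem_simple (support_subset_simple δ hγ)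
  have hlink : ∀ u ∈ R.support δ, ∀ v ∈ R.support δ,
      ∃ z ∈ R.roots, ⟪z, z⟫ = ⟪u, u⟫ ∧ ⟪z, v⟫ ≠ 0 := fun u hu v hv =>
    exists_root_inner_ne_zero_of_reachable hroots (reachable_of_mem_support hδ hu hv)
      (hroots hu) (inner_self_pos (hroots hu)).ne'
  have hlong : ∀ u ∈ R.support δ, u ≠ α₀ →
      ⟪u, u⟫ = 2 * ⟪α₀, α₀⟫ ∨ ⟪u, u⟫ = 3 * ⟪α₀, α₀⟫ := by
    intro u hu huα₀
    obtain ⟨z, hz, hzz, hzu⟩ := hlink α₀ hα₀ u hu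
    have hlt : ⟪α₀, α₀⟫ < ⟪u, u⟫ := by
      rw [real_inner_self_eq_norm_sq, real_inner_self_eq_norm_sq]
      gcongr
      exact hshort u hu huα₀
    have := inner_self_pos (hroots hα₀)
    rcases inner_self_eq_or_of_inner_ne_zero hz (hroots hu) hzu with h | h | h | h | h <;>
      rw [hzz] at h
    · linarith
    · exact Or.inl h
    · exact Or.inr h
    · linarith
    · linarith
  obtain ⟨z, hz, hzz, hzy⟩ := hlink x hx y hy
  have := inner_self_pos (hroots hα₀)
  refine (sq_eq_sq₀ (norm_nonneg x) (norm_nonneg y)).1 ?_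
  rw [← real_inner_self_eq_norm_sq, ← real_inner_self_eq_norm_sq]
  rcases inner_self_eq_or_of_inner_ne_zero hz (hroots hy) hzy with h | h | h | h | h <;>
    rw [hzz] at h <;> rcases hlong x hx hxα₀ with hx' | hx' <;>
    rcases hlong y hy hyα₀ with hy' | hy' <;> linarith

lemma coeff_add_smul {β α γ : V} (hβ : β ∈ R.simple) (hα : α ∈ R.simple)
    (hγ : γ ∈ R.simple) (t : ℝ) :
    R.coeff (β + t • α) γ = (if β = γ then 1 else 0) + if α = γ then t else 0 := by
  rw [coeff_add _ _ hγ, coeff_smul _ _ hγ, coeff_simple hβ hγ, coeff_simple hα hγ, mul_ite,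
    mul_one, mul_zero]

lemma support_add_coeff_smul_subset {δ β α : V} (hβ : β ∈ R.support δ) (hα : α ∈ R.simple) :
    R.support (β + R.coeff δ α • α) ⊆ R.support δ := by
  intro γ hγ
  obtain ⟨hγs, hne⟩ := mem_support.1 hγ
  rw [coeff_add_smul (support_subset_simple δ hβ) hα hγs] at hne
  by_cases hβγ : β = γ
  · exact hβγ ▸ hβ
  by_cases hαγ : α = γ
  · subst hαγ
    rw [if_neg hβγ, if_pos rfl, zero_add] at hne
    exact mem_support.2 ⟨hγs, hne⟩
  · simp [hβγ, hαγ] at hne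

lemma isABRoot_add_coeff_smul {A B : Finset V} {δ β α : V} (hδ : R.IsABRoot A B δ)
    (hβ : β ∈ R.support δ) (hα : α ∈ R.support δ) (hαA : α ∈ A) (hβα : β ≠ α)
    (hroot : β + R.coeff δ α • α ∈ R.roots) : R.IsABRoot A B (β + R.coeff δ α • α) := by
  have hβs := support_subset_simple δ hβ
  have hαs := support_subset_simple δ hα
  refine ⟨mem_pos_of_coeff_pos hroot hβs ?_,
    (support_add_coeff_smul_subset hβ hαs).trans hδ.2.1, α, hαA, ?_⟩
  · rw [coeff_add_smul hβs hαs hβs, if_pos rfl, if_neg hβα.symm]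
    norm_num
  · rw [coeff_add_smul hβs hαs hαs, if_neg hβα, if_pos rfl, zero_add]
    exact coeff_pos_of_mem_support hδ.1 hα

lemma cle_add_coeff_smul {δ β α : V} (hδ : δ ∈ R.pos) (hβ : β ∈ R.support δ)
    (hα : α ∈ R.simple) (hβα : β ≠ α) : R.cle (β + R.coeff δ α • α) δ := by
  intro γ hγ
  rw [coeff_add_smul (support_subset_simple δ hβ) hα hγ]
  by_cases hβγ : β = γ
  · subst hβγ
    rw [if_pos rfl, if_neg hβα.symm, add_zero]
    exact one_le_coeff_of_mem_support hδ hβ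
  by_cases hαγ : α = γ
  · subst hαγ
    rw [if_neg hβγ, if_pos rfl, zero_add]
  · rw [if_neg hβγ, if_neg hαγ, add_zero]
    exact R.pos_coeff_nonneg δ hδ γ hγ

lemma support_sub_add_coeff_smul_subset {δ β α : V} (hβ : β ∈ R.support δ)
    (hα : α ∈ R.simple) (hβα : β ≠ α) :
    R.support (δ - (β + R.coeff δ α • α)) ⊆ (R.support δ).erase α := by
  intro γ hγ
  obtain ⟨hγs, hne⟩ := mem_support.1 hγ
  rw [coeff_sub _ _ hγs, coeff_add_smul (support_subset_simple δ hβ) hα hγs] at hne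
  have hγα : γ ≠ α := by
    rintro rfl
    simp [hβα] at hne
  refine Finset.mem_erase.2 ⟨hγα, ?_⟩
  by_cases hβγ : β = γ
  · exact hβγ ▸ hβ
  · rw [if_neg hβγ, if_neg (Ne.symm hγα), add_zero, sub_zero] at hne
    exact mem_support.2 ⟨hγs, hne⟩

lemma sum_coeff_add_smul_mul_inner_self {S : Finset V} (hS : S ⊆ R.simple) {β α : V}
    (hβ : β ∈ R.simple) (hα : α ∈ R.simple) (t : ℝ) :
    ∑ γ ∈ S, R.coeff (β + t • α) γ * ⟪γ, γ⟫ =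
      (if β ∈ S then ⟪β, β⟫ else 0) + if α ∈ S then t * ⟪α, α⟫ else 0 := by
  rw [Finset.sum_congr rfl fun γ hγ => by rw [coeff_add_smul hβ hα (hS hγ)]]
  simp only [add_mul, ite_mul, one_mul, zero_mul, Finset.sum_add_distrib, Finset.sum_ite_eq]

lemma sum_coeff_add_smul_le {A B : Finset V} (hA : A ⊆ R.simple) (hB : B ⊆ R.simple)
    (hAB : Disjoint A B) {β α : V} (hβ : β ∈ R.simple) (hα : α ∈ A) {t : ℝ}
    (hβt : ⟪β, β⟫ ≤ t * ⟪α, α⟫) :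
    ∑ b ∈ B, R.coeff (β + t • α) b * ⟪b, b⟫ ≤ ∑ a ∈ A, R.coeff (β + t • α) a * ⟪a, a⟫ := by
  rw [sum_coeff_add_smul_mul_inner_self hB hβ (hA hα),
    sum_coeff_add_smul_mul_inner_self hA hβ (hA hα), if_pos hα,
    if_neg (Finset.disjoint_left.1 hAB hα)]
  have := real_inner_self_nonneg (x := β)
  by_cases hβB : β ∈ B
  · rw [if_pos hβB, if_neg (Finset.disjoint_right.1 hAB hβB)]
    linarith
  · rw [if_neg hβB]
    split_ifs <;> linarith

end RootSystemData

/-- Suppose `δ` is an `(A,B)`-root, `α₀ ∈ C(δ) ∩ A` is strictly shorter than every other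
simple root in `C(δ) \\ {α₀}`, and `β ∈ C(δ) \\ {α₀}` satisfies
`c_{α₀}(δ) = −2(β,α₀)/(α₀,α₀)`.  Then `σ = β − (2(β,α₀)/(α₀,α₀))·α₀` is an `(A,B)`-root of
length `|β|` with `σ ≤ δ`, satisfying the sum inequality, all simple roots in `C(δ−σ)`
have the same length not greater than `|σ|`; in particular `δ` is significant. -/
theorem isSignificant_of_short_root
    {V : Type*} [NormedAddCommGroup V] [InnerProductSpace ℝ V]
    (R : RootSystemData V)
    (A B : Finset V) (hA : A ⊆ R.simple) (hB : B ⊆ R.simple) (hAB : Disjoint A B)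
    (δ α₀ β : V) (hδ : R.IsABRoot A B δ)
    (hα₀supp : α₀ ∈ R.support δ) (hα₀A : α₀ ∈ A)
    (hshort : ∀ x ∈ R.support δ, x ≠ α₀ → ‖α₀‖ < ‖x‖)
    (hβ : β ∈ R.support δ) (hβne : β ≠ α₀)
    (hc : R.coeff δ α₀ = -(2 * ⟪β, α₀⟫ / ⟪α₀, α₀⟫))
    (σ : V) (hσ : σ = β - (2 * ⟪β, α₀⟫ / ⟪α₀, α₀⟫) • α₀) :
    R.IsABRoot A B σ ∧ ‖σ‖ = ‖β‖ ∧ R.cle σ δ ∧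
      (∑ b ∈ B, R.coeff σ b * ⟪b, b⟫) ≤ (∑ a ∈ A, R.coeff σ a * ⟪a, a⟫) ∧
      (∀ x ∈ R.support (δ - σ), ∀ y ∈ R.support (δ - σ), ‖x‖ = ‖y‖) ∧
      (∀ x ∈ R.support (δ - σ), ‖x‖ ≤ ‖σ‖) ∧
      R.IsSignificant A B δ := by
  have hα₀s := R.support_subset_simple δ hα₀supp
  have hβs := R.support_subset_simple δ hβ
  have hα₀r := R.mem_roots_of_mem_simple hα₀s
  have hβr := R.mem_roots_of_mem_simple hβs
  have hσr : σ ∈ R.roots := hσ ▸ R.reflect_mem β hβr α₀ hα₀r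
  have hnorm : ‖σ‖ = ‖β‖ := hσ ▸ norm_reflect β α₀
  have hββ : ⟪β, β⟫ ≤ R.coeff δ α₀ * ⟪α₀, α₀⟫ := by
    have ht := R.coeff_pos_of_mem_support hδ.1 hα₀supp
    rw [hc] at ht ⊢
    exact R.inner_self_le_neg_cartan_mul hβr hα₀r (neg_pos.1 ht)
  obtain rfl : σ = β + R.coeff δ α₀ • α₀ := by rw [hσ, hc, neg_smul, sub_eq_add_neg]
  have hσAB := R.isABRoot_add_coeff_smul hδ hβ hα₀supp hα₀A hβne hσr
  have hcle := R.cle_add_coeff_smul hδ.1 hβ hα₀s hβne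
  have hsum := R.sum_coeff_add_smul_le hA hB hAB hβs hα₀A hββ
  have hlen : ∀ x ∈ R.support (δ - (β + R.coeff δ α₀ • α₀)), ‖x‖ = ‖β‖ := fun x hx =>
    have hx' := Finset.mem_erase.1 (R.support_sub_add_coeff_smul_subset hβ hα₀s hβne hx)
    R.norm_eq_of_mem_support hδ.1 hα₀supp hshort hx'.2 hx'.1 hβ hβne
  have hequal := fun x hx y hy => (hlen x hx).trans (hlen y hy).symm
  have hshorter := fun x hx => (hlen x hx).trans hnorm.symm |>.le
  exact ⟨hσAB, hnorm, hcle, hsum, hequal, hshorter, hδ, _, hσAB, hcle, hsum, hequal, hshorter⟩
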